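/- Let n ≥ 3 and let λ₁ ≥ ... ≥ λₙ be real numbers with ∑_{i=1}^n arctan(λᵢ) ≥ (n-2)π/2 and λₙ < 0. Then σₙ(λ) = λ₁···λₙ < 0 and σ_{n-1}(λ) ≥ 0, and hence (λ₁/2)(σ_{n-1}/σₙ) ≤ 0. -/

import Mathlib

/-!
Write `θᵢ = π/2 - arctan λᵢ ∈ (0, π)`; the phase condition says `∑ θᵢ ≤ π`. Since `λₙ < 0` forces
`θₙ > π/2`, every other `θᵢ` is below `π/2`, so `λᵢ > 0` and `θᵢ = arctan (1/λᵢ)`. Subadditivity of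
`arctan` on `[0, ∞)` turns `∑_{i<n} arctan (1/λᵢ) ≤ π - θₙ = arctan (-1/λₙ)` into
`∑_{i<n} 1/λᵢ ≤ -1/λₙ`, i.e. `∑ 1/λᵢ ≤ 0`. As `σₙ < 0` and `σ_{n-1} = σₙ ∑ 1/λᵢ`, the signs follow.
-/

/-- The k-th elementary symmetric polynomial of λ₁,...,λₙ. -/
def esymm (n k : ℕ) (lam : Fin n → ℝ) : ℝ :=
  ∑ s ∈ Finset.powersetCard k (Finset.univ : Finset (Fin n)), ∏ i ∈ s, lam i

open Real Finset

lemma Real.arctan_add_le_add_arctan {x y : ℝ} (hx : 0 ≤ x) (hy : 0 ≤ y) :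
    arctan (x + y) ≤ arctan x + arctan y := by
  rcases lt_or_ge (x * y) 1 with hxy | hxy
  · rw [arctan_add hxy]
    apply arctan_strictMono.monotone
    rw [le_div_iff₀ (by linarith)]
    nlinarith [mul_nonneg (add_nonneg hx hy) (mul_nonneg hx hy)]
  · have hx0 : 0 < x := by nlinarith
    have hinv : x⁻¹ ≤ y := by rw [inv_le_iff_one_le_mul₀' hx0]; nlinarith
    have := arctan_strictMono.monotone hinv
    rw [arctan_inv_of_pos hx0] at this
    linarith [arctan_lt_pi_div_two (x + y)]

lemma Real.arctan_sum_le_sum_arctan {ι : Type*} (s : Finset ι) {f : ι → ℝ}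
    (hf : ∀ i ∈ s, 0 ≤ f i) : arctan (∑ i ∈ s, f i) ≤ ∑ i ∈ s, arctan (f i) :=
  le_sum_of_subadditive_on_pred arctan (0 ≤ ·) arctan_zero.le
    (fun _ _ hx hy ↦ arctan_add_le_add_arctan hx hy) (fun _ _ ↦ add_nonneg) f hf

section SupercriticalPhase

variable {ι : Type*} [Fintype ι] {lam : ι → ℝ}

lemma sum_pi_div_two_sub_arctan_le_pi
    (hsum : ((Fintype.card ι : ℝ) - 2) * π / 2 ≤ ∑ i, arctan (lam i)) :
    ∑ i, (π / 2 - arctan (lam i)) ≤ π := by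
  rw [sum_sub_distrib, sum_const, card_univ, nsmul_eq_mul]
  linarith

lemma sum_erase_pi_div_two_sub_arctan_le [DecidableEq ι] (k : ι)
    (hsum : ((Fintype.card ι : ℝ) - 2) * π / 2 ≤ ∑ i, arctan (lam i)) :
    ∑ i ∈ univ.erase k, (π / 2 - arctan (lam i)) ≤ π / 2 + arctan (lam k) := by
  have hle := sum_pi_div_two_sub_arctan_le_pi hsum
  rw [← add_sum_erase _ _ (mem_univ k)] at hle
  linarith

lemma pos_of_ne_of_sum_arctan_ge [DecidableEq ι] {k : ι} (hk : lam k < 0)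
    (hsum : ((Fintype.card ι : ℝ) - 2) * π / 2 ≤ ∑ i, arctan (lam i)) {i : ι} (hi : i ≠ k) :
    0 < lam i := by
  have hterm : π / 2 - arctan (lam i) ≤ ∑ j ∈ univ.erase k, (π / 2 - arctan (lam j)) :=
    single_le_sum (f := fun j ↦ π / 2 - arctan (lam j))
      (fun j _ ↦ by linarith [arctan_lt_pi_div_two (lam j)]) (mem_erase.mpr ⟨hi, mem_univ i⟩)
  have := sum_erase_pi_div_two_sub_arctan_le k hsum
  exact arctan_pos.mp (by linarith [arctan_lt_zero.mpr hk])

lemma sum_inv_nonpos_of_sum_arctan_ge {k : ι} (hk : lam k < 0)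
    (hsum : ((Fintype.card ι : ℝ) - 2) * π / 2 ≤ ∑ i, arctan (lam i)) :
    ∑ i, (lam i)⁻¹ ≤ 0 := by
  classical
  have hpos : ∀ i ∈ univ.erase k, 0 < lam i :=
    fun i hi ↦ pos_of_ne_of_sum_arctan_ge hk hsum (ne_of_mem_erase hi)
  have hneg_k : 0 < -lam k := neg_pos.mpr hk
  have harctan : arctan (∑ i ∈ univ.erase k, (lam i)⁻¹) ≤ arctan (-lam k)⁻¹ := calc
    _ ≤ ∑ i ∈ univ.erase k, arctan (lam i)⁻¹ :=
      arctan_sum_le_sum_arctan _ fun i hi ↦ (inv_pos.mpr (hpos i hi)).le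
    _ = ∑ i ∈ univ.erase k, (π / 2 - arctan (lam i)) :=
      sum_congr rfl fun i hi ↦ arctan_inv_of_pos (hpos i hi)
    _ ≤ π / 2 - arctan (-lam k) := by
      rw [arctan_neg, sub_neg_eq_add]
      exact sum_erase_pi_div_two_sub_arctan_le k hsum
    _ = arctan (-lam k)⁻¹ := (arctan_inv_of_pos hneg_k).symm
  have hrest := arctan_strictMono.le_iff_le.mp harctan
  rw [inv_neg] at hrest
  rw [← add_sum_erase _ _ (mem_univ k)]
  linarith

end SupercriticalPhase

lemma Finset.sum_powersetCard_card_sub_one {ι M : Type*} [Fintype ι] [Nonempty ι] [DecidableEq ι]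
    [AddCommMonoid M] (f : Finset ι → M) :
    ∑ t ∈ powersetCard (Fintype.card ι - 1) univ, f t = ∑ i, f (univ.erase i) := by
  refine (sum_bij (fun i _ ↦ univ.erase i) (fun i _ ↦ ?_) (fun i _ j _ h ↦ ?_)
    (fun t ht ↦ ?_) (fun _ _ ↦ rfl)).symm
  · exact mem_powersetCard.mpr ⟨erase_subset _ _, by rw [card_erase_of_mem (mem_univ i), card_univ]⟩
  · exact erase_injOn univ (mem_univ i) (mem_univ j) h
  · have hcompl : #tᶜ = 1 := by
      rw [card_compl, (mem_powersetCard.mp ht).2]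
      have := Fintype.card_pos (α := ι)
      omega
    obtain ⟨i, hi⟩ := card_eq_one.mp hcompl
    exact ⟨i, mem_univ i, by rw [← compl_singleton, ← hi, compl_compl]⟩

lemma esymm_self (n : ℕ) (lam : Fin n → ℝ) : esymm n n lam = ∏ i, lam i := by
  have : powersetCard n (univ : Finset (Fin n)) = {univ} := by
    simpa using powersetCard_self (univ : Finset (Fin n))
  rw [esymm, this, sum_singleton]

lemma esymm_sub_one {n : ℕ} (hn : 0 < n) (lam : Fin n → ℝ) :
    esymm n (n - 1) lam = ∑ i, ∏ j ∈ univ.erase i, lam j := by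
  have : Nonempty (Fin n) := ⟨⟨0, hn⟩⟩
  rw [esymm]
  simpa using sum_powersetCard_card_sub_one (ι := Fin n) (fun s ↦ ∏ i ∈ s, lam i)

lemma esymm_sub_one_eq_mul_sum_inv {n : ℕ} (hn : 0 < n) {lam : Fin n → ℝ}
    (hlam : ∀ i, lam i ≠ 0) : esymm n (n - 1) lam = esymm n n lam * ∑ i, (lam i)⁻¹ := by
  rw [esymm_sub_one hn, esymm_self, mul_sum]
  refine sum_congr rfl fun i _ ↦ ?_
  rw [eq_mul_inv_iff_mul_eq₀ (hlam i), prod_erase_mul _ _ (mem_univ i)]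

theorem esymm_signs (n : ℕ) (hn : 3 ≤ n) (lam : Fin n → ℝ)
    (hsum : ∑ i, Real.arctan (lam i) ≥ ((n : ℝ) - 2) * Real.pi / 2)
    (hneg : lam ⟨n - 1, by omega⟩ < 0) :
    esymm n n lam < 0 ∧ 0 ≤ esymm n (n - 1) lam ∧
      (lam ⟨0, by omega⟩ / 2) * (esymm n (n - 1) lam / esymm n n lam) ≤ 0 := by
  classical
  set last : Fin n := ⟨n - 1, by omega⟩
  replace hsum : ((Fintype.card (Fin n) : ℝ) - 2) * π / 2 ≤ ∑ i, arctan (lam i) := by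
    rwa [Fintype.card_fin]
  have hpos : ∀ i ≠ last, 0 < lam i := fun i ↦ pos_of_ne_of_sum_arctan_ge hneg hsum
  have hinv : ∑ i, (lam i)⁻¹ ≤ 0 := sum_inv_nonpos_of_sum_arctan_ge hneg hsum
  have hprod : esymm n n lam < 0 := by
    rw [esymm_self, ← mul_prod_erase _ _ (mem_univ last)]
    exact mul_neg_of_neg_of_pos hneg (prod_pos fun i hi ↦ hpos i (ne_of_mem_erase hi))
  have hne : ∀ i, lam i ≠ 0 := fun i ↦ by
    by_cases hi : i = last
    · exact hi ▸ hneg.ne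
    · exact (hpos i hi).ne'
  have hfirst : 0 < lam ⟨0, by omega⟩ := hpos _ (by simp [last, Fin.ext_iff]; omega)
  rw [esymm_sub_one_eq_mul_sum_inv (by omega) hne, mul_div_cancel_left₀ _ hprod.ne]
  exact ⟨hprod, mul_nonneg_of_nonpos_of_nonpos hprod.le hinv,
    mul_nonpos_of_nonneg_of_nonpos (by positivity) hinv⟩
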